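/- Let X and Y be measurable spaces, k : X × X → ℝ and l : Y × Y → ℝ bounded symmetric measurable kernels, P a probability measure on X × Y, and m ≥ 4. Let W_1,…,W_m with W_i = (x_i, y_i) be i.i.d. with law P. Then the U-statistic ((m−4)!/m!) Σ_{(i,j,q,r)} h(W_i, W_j, W_q, W_r), where the sum ranges over all 4-tuples of pairwise distinct indices in {1,…,m}, has expectation equal to HSIC(k, l; P). -/

import Mathlib

/-!
Averaging over the 24 orderings of the arguments does not change the expectation of a function of
i.i.d. points, and neither does evaluating it at any 4 distinct sample points, since
`W ↦ W ∘ e` preserves the product measure for every injective `e`. As there are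
`m!/(m-4)!` tuples of distinct indices, the U-statistic therefore has the same mean as the
unsymmetrised kernel `k(x₁,x₂) (l(y₁,y₂) + l(y₃,y₄) - 2 l(y₁,y₃))` at four i.i.d. points, and
Fubini's theorem splits that mean into the three terms of `HSIC(k, l; P)`.
-/

open MeasureTheory ProbabilityTheory

theorem MeasureTheory.MeasurePreserving.integral_comp_of_aestronglyMeasurable
    {α β E : Type*} [MeasurableSpace α] [MeasurableSpace β] [NormedAddCommGroup E]
    [NormedSpace ℝ E] {μ : Measure α} {ν : Measure β} {f : α → β}
    (hf : MeasurePreserving f μ ν) {g : β → E} (hg : AEStronglyMeasurable g ν) :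
    ∫ x, g (f x) ∂μ = ∫ y, g y ∂ν := by
  rw [← hf.map_eq] at hg ⊢
  exact (integral_map hf.measurable.aemeasurable hg).symm

theorem injective_vecFour_iff {α : Type*} {a b c d : α} :
    Function.Injective ![a, b, c, d] ↔ a ≠ b ∧ a ≠ c ∧ a ≠ d ∧ b ≠ c ∧ b ≠ d ∧ c ≠ d := by
  simp only [Matrix.vecCons, Fin.cons_injective_iff, Fin.exists_fin_succ, Set.mem_range]
  simp [Function.injective_of_subsingleton]
  grind

section Combinatorics

variable {α M : Type*} [Fintype α] [AddCommMonoid M]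

theorem Fintype.sum_fin_succ_arrow {n : ℕ} (F : (Fin (n + 1) → α) → M) :
    ∑ v, F v = ∑ a, ∑ t : Fin n → α, F (Fin.cons a t) := by
  rw [← Fintype.sum_prod_type']
  exact (Fintype.sum_equiv (Fin.consEquiv fun _ => α) _ _ fun _ => rfl).symm

theorem sum_ite_pairwise_ne_four [DecidableEq α] {β : Type*} (W : α → β)
    (G : (Fin 4 → β) → M) :
    ∑ i, ∑ j, ∑ q, ∑ r,
        (if i ≠ j ∧ i ≠ q ∧ i ≠ r ∧ j ≠ q ∧ j ≠ r ∧ q ≠ r then G ![W i, W j, W q, W r] else 0) =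
      ∑ e : Fin 4 ↪ α, G (W ∘ e) := by
  classical
  calc _ = ∑ v : Fin 4 → α, if Function.Injective v then G (W ∘ v) else 0 := by
        simp only [Fintype.sum_fin_succ_arrow, Finset.univ_unique, Finset.sum_singleton,
          Fin.comp_cons, ← injective_vecFour_iff]
        congr!
    _ = ∑ e : Fin 4 ↪ α, G (W ∘ e) := by
        rw [← Finset.sum_filter,
          Finset.sum_subtype (p := Function.Injective) _ fun _ => by simp]
        exact Fintype.sum_equiv (Equiv.subtypeInjectiveEquivEmbedding (Fin 4) α) _ _ fun _ => rfl

end Combinatorics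

section PiProbability

variable {Z : Type*} [MeasurableSpace Z] (P : Measure Z) [IsProbabilityMeasure P]
  {ι κ : Type*} [Fintype ι] [Fintype κ]

theorem measurePreserving_comp_of_injective {e : κ → ι} (he : Function.Injective e) :
    MeasurePreserving (fun W : ι → Z => W ∘ e) (Measure.pi fun _ => P)
      (Measure.pi fun _ => P) := by
  classical
  have hrestrict := (measurePreserving_fst (ν := Measure.pi fun _ => P)).comp
    (measurePreserving_piEquivPiSubtypeProd (fun _ : ι => P) (· ∈ Set.range e))
  -- the `Fintype` instance on the range that `piEquivPiSubtypeProd` produces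
  let _ : Fintype (Set.range e) := Subtype.fintype _
  have hreindex := MeasurePreserving.symm _
    (measurePreserving_piCongrLeft (fun _ : Set.range e => P) (Equiv.ofInjective e he))
  exact hreindex.comp hrestrict

theorem integral_sum_comp_injective {S : Type*} (s : Finset S) {e : S → κ → ι}
    (he : ∀ a, Function.Injective (e a)) {g : (κ → Z) → ℝ}
    (hg : Integrable g (Measure.pi fun _ => P)) :
    ∫ W, ∑ a ∈ s, g (W ∘ e a) ∂(Measure.pi fun _ => P) =
      s.card * ∫ w, g w ∂(Measure.pi fun _ => P) := by
  have hmp := fun a => measurePreserving_comp_of_injective P (he a)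
  have hint : ∀ a, Integrable (fun W : ι → Z => g (W ∘ e a)) (Measure.pi fun _ => P) :=
    fun a => (hmp a).integrable_comp_of_integrable hg
  rw [integral_finsetSum s fun a _ => hint a,
    Finset.sum_congr rfl fun a _ =>
      (hmp a).integral_comp_of_aestronglyMeasurable hg.aestronglyMeasurable,
    Finset.sum_const, nsmul_eq_mul]

end PiProbability

theorem measurePreserving_finFourArrow {Z : Type*} [MeasurableSpace Z] (P : Measure Z)
    [SigmaFinite P] :
    MeasurePreserving (fun w : Fin 4 → Z => ((w 0, w 1), (w 2, w 3)))
      (Measure.pi fun _ => P) ((P.prod P).prod (P.prod P)) :=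
  (MeasurePreserving.symm _ (measurePreserving_prodAssoc P P (P.prod P))).comp <|
    ((MeasurePreserving.id P).prod
      ((MeasurePreserving.id P).prod (measurePreserving_finTwoArrow P))).comp <|
    ((MeasurePreserving.id P).prod (measurePreserving_piFinSuccAbove (fun _ => P) 0)).comp
      (measurePreserving_piFinSuccAbove (fun _ => P) 0)

section HSIC

variable {X Y : Type*}

/-- The summand of the HSIC kernel `h` for the identity permutation. -/
def hsicCore (k : X × X → ℝ) (l : Y × Y → ℝ) (w : Fin 4 → X × Y) : ℝ :=
  k ((w 0).1, (w 1).1) *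
    (l ((w 0).2, (w 1).2) + l ((w 2).2, (w 3).2) - 2 * l ((w 0).2, (w 2).2))

theorem abs_hsicCore_le {k : X × X → ℝ} {l : Y × Y → ℝ} {Ck Cl : ℝ} (hCk : ∀ p, |k p| ≤ Ck)
    (hCl : ∀ p, |l p| ≤ Cl) (w : Fin 4 → X × Y) :
    |hsicCore k l w| ≤ Ck * (4 * Cl) := by
  rw [hsicCore, abs_mul]
  refine mul_le_mul (hCk _) ?_ (abs_nonneg _) ((abs_nonneg _).trans (hCk ((w 0).1, (w 1).1)))
  have h₁ := abs_le.mp (hCl ((w 0).2, (w 1).2))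
  have h₂ := abs_le.mp (hCl ((w 2).2, (w 3).2))
  have h₃ := abs_le.mp (hCl ((w 0).2, (w 2).2))
  rw [abs_le]
  constructor <;> linarith

variable [MeasurableSpace X] [MeasurableSpace Y]

noncomputable def hsic (k : X × X → ℝ) (l : Y × Y → ℝ) (P : Measure (X × Y)) : ℝ :=
  (∫ w : (X × Y) × (X × Y), k (w.1.1, w.2.1) * l (w.1.2, w.2.2) ∂(P.prod P))
    + (∫ p, k p ∂((P.map Prod.fst).prod (P.map Prod.fst)))
      * (∫ p, l p ∂((P.map Prod.snd).prod (P.map Prod.snd)))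
    - 2 * ∫ w : X × Y, (∫ x', k (w.1, x') ∂(P.map Prod.fst))
      * (∫ y', l (w.2, y') ∂(P.map Prod.snd)) ∂P

variable {k : X × X → ℝ} {l : Y × Y → ℝ} {Ck Cl : ℝ}

theorem measurable_hsicCore (hk : Measurable k) (hl : Measurable l) :
    Measurable (hsicCore k l) := by
  unfold hsicCore
  fun_prop

variable (hk : Measurable k) (hl : Measurable l) (hCk : ∀ p, |k p| ≤ Ck) (hCl : ∀ p, |l p| ≤ Cl)
  (P : Measure (X × Y)) [IsProbabilityMeasure P]
include hk hl hCk hCl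

theorem integral_hsicCore_eq_integral_prod :
    ∫ w, hsicCore k l w ∂(Measure.pi fun _ => P) =
      (∫ v, k (v.1.1.1, v.1.2.1) * l (v.1.1.2, v.1.2.2) ∂((P.prod P).prod (P.prod P)))
        + (∫ v, k (v.1.1.1, v.1.2.1) * l (v.2.1.2, v.2.2.2) ∂((P.prod P).prod (P.prod P)))
        - 2 * ∫ v, k (v.1.1.1, v.1.2.1) * l (v.1.1.2, v.2.1.2) ∂((P.prod P).prod (P.prod P)) := by
  have hkl : ∀ p q, ‖k p * l q‖ ≤ Ck * Cl := fun p q => norm_mul_le_of_le (hCk p) (hCl q)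
  have hA : Integrable (fun v : ((X × Y) × (X × Y)) × ((X × Y) × (X × Y)) =>
      k (v.1.1.1, v.1.2.1) * l (v.1.1.2, v.1.2.2)) ((P.prod P).prod (P.prod P)) :=
    .of_bound (by fun_prop : Measurable _).aestronglyMeasurable _ (ae_of_all _ fun _ => hkl _ _)
  have hB : Integrable (fun v : ((X × Y) × (X × Y)) × ((X × Y) × (X × Y)) =>
      k (v.1.1.1, v.1.2.1) * l (v.2.1.2, v.2.2.2)) ((P.prod P).prod (P.prod P)) :=
    .of_bound (by fun_prop : Measurable _).aestronglyMeasurable _ (ae_of_all _ fun _ => hkl _ _)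
  have hC : Integrable (fun v : ((X × Y) × (X × Y)) × ((X × Y) × (X × Y)) =>
      k (v.1.1.1, v.1.2.1) * l (v.1.1.2, v.2.1.2)) ((P.prod P).prod (P.prod P)) :=
    .of_bound (by fun_prop : Measurable _).aestronglyMeasurable _ (ae_of_all _ fun _ => hkl _ _)
  calc ∫ w, hsicCore k l w ∂(Measure.pi fun _ => P)
      = ∫ v, (k (v.1.1.1, v.1.2.1) * l (v.1.1.2, v.1.2.2)
          + k (v.1.1.1, v.1.2.1) * l (v.2.1.2, v.2.2.2)
          - 2 * (k (v.1.1.1, v.1.2.1) * l (v.1.1.2, v.2.1.2))) ∂((P.prod P).prod (P.prod P)) := by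
        refine (integral_congr_ae (ae_of_all _ fun w => ?_)).trans
          ((measurePreserving_finFourArrow P).integral_comp_of_aestronglyMeasurable
            (Measurable.aestronglyMeasurable (by fun_prop)))
        simp only [hsicCore]
        ring
    _ = _ := by
        rw [integral_sub _ (hC.const_mul 2), integral_add hA hB, integral_const_mul]
        exact hA.add hB

theorem integral_hsic_crossTerm :
    ∫ v, k (v.1.1.1, v.1.2.1) * l (v.1.1.2, v.2.1.2) ∂((P.prod P).prod (P.prod P)) =
      ∫ w, (∫ x', k (w.1, x') ∂(P.map Prod.fst)) * (∫ y', l (w.2, y') ∂(P.map Prod.snd)) ∂P := by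
  have hint : Integrable (fun t : (X × Y) × ((X × Y) × ((X × Y) × (X × Y))) =>
      k (t.1.1, t.2.1.1) * l (t.1.2, t.2.2.1.2)) (P.prod (P.prod (P.prod P))) :=
    .of_bound (by fun_prop : Measurable _).aestronglyMeasurable _
      (ae_of_all _ fun _ => norm_mul_le_of_le (hCk _) (hCl _))
  have hKx : ∀ x, ∫ x', k (x, x') ∂(P.map Prod.fst) = ∫ w, k (x, w.1) ∂P := fun x =>
    integral_map measurable_fst.aemeasurable (by fun_prop : Measurable _).aestronglyMeasurable
  have hLy : ∀ y, ∫ y', l (y, y') ∂(P.map Prod.snd) = ∫ w, l (y, w.2) ∂P := fun y =>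
    integral_map measurable_snd.aemeasurable (by fun_prop : Measurable _).aestronglyMeasurable
  calc ∫ v, k (v.1.1.1, v.1.2.1) * l (v.1.1.2, v.2.1.2) ∂((P.prod P).prod (P.prod P))
      = ∫ t, k (t.1.1, t.2.1.1) * l (t.1.2, t.2.2.1.2) ∂(P.prod (P.prod (P.prod P))) :=
        ((MeasurePreserving.symm _ (measurePreserving_prodAssoc P P (P.prod P))).integral_comp'
          (g := fun v => k (v.1.1.1, v.1.2.1) * l (v.1.1.2, v.2.1.2))).symm
    _ = ∫ a, ∫ r, k (a.1, r.1.1) * l (a.2, r.2.1.2) ∂(P.prod (P.prod P)) ∂P :=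
        integral_prod _ hint
    _ = ∫ a, (∫ b, k (a.1, b.1) ∂P) * ∫ c, l (a.2, c.2) ∂P ∂P := by
        refine integral_congr_ae (ae_of_all _ fun a => ?_)
        dsimp only
        rw [integral_prod_mul (fun b : X × Y => k (a.1, b.1))
          (fun r : (X × Y) × (X × Y) => l (a.2, r.1.2))]
        congr 1
        simpa using integral_fun_fst (μ := P) (ν := P) fun c : X × Y => l (a.2, c.2)
    _ = _ := by simp only [hKx, hLy]

theorem integral_hsicCore : ∫ w, hsicCore k l w ∂(Measure.pi fun _ => P) = hsic k l P := by
  have hpair : ∫ v, k (v.1.1.1, v.1.2.1) * l (v.1.1.2, v.1.2.2) ∂((P.prod P).prod (P.prod P)) =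
      ∫ u, k (u.1.1, u.2.1) * l (u.1.2, u.2.2) ∂(P.prod P) := by
    simpa using integral_fun_fst (μ := P.prod P) (ν := P.prod P)
      fun u => k (u.1.1, u.2.1) * l (u.1.2, u.2.2)
  have hindep : ∫ v, k (v.1.1.1, v.1.2.1) * l (v.2.1.2, v.2.2.2) ∂((P.prod P).prod (P.prod P)) =
      (∫ p, k p ∂((P.map Prod.fst).prod (P.map Prod.fst)))
        * ∫ p, l p ∂((P.map Prod.snd).prod (P.map Prod.snd)) := by
    rw [Measure.map_prod_map _ _ measurable_fst measurable_fst,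
      Measure.map_prod_map _ _ measurable_snd measurable_snd,
      integral_map (by fun_prop) hk.aestronglyMeasurable,
      integral_map (by fun_prop) hl.aestronglyMeasurable]
    exact integral_prod_mul (fun u : (X × Y) × (X × Y) => k (u.1.1, u.2.1))
      (fun u : (X × Y) × (X × Y) => l (u.1.2, u.2.2))
  rw [integral_hsicCore_eq_integral_prod hk hl hCk hCl, hpair, hindep,
    integral_hsic_crossTerm hk hl hCk hCl, hsic]

end HSIC

theorem stmt_4_general
    {X Y : Type*} [MeasurableSpace X] [MeasurableSpace Y]
    (k : X × X → ℝ) (l : Y × Y → ℝ)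
    (hk_meas : Measurable k) (hl_meas : Measurable l)
    (hk_bdd : ∃ C : ℝ, ∀ p, |k p| ≤ C) (hl_bdd : ∃ C : ℝ, ∀ p, |l p| ≤ C)
    (P : Measure (X × Y)) [IsProbabilityMeasure P]
    (Px : Measure X) (Py : Measure Y)
    (hPx : Px = P.map Prod.fst) (hPy : Py = P.map Prod.snd)
    (HSIC : ℝ)
    (hHSIC : HSIC =
      (∫ w : (X × Y) × (X × Y), k (w.1.1, w.2.1) * l (w.1.2, w.2.2) ∂(P.prod P))
      + (∫ p, k p ∂(Px.prod Px)) * (∫ p, l p ∂(Py.prod Py))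
      - 2 * ∫ w : X × Y, (∫ x', k (w.1, x') ∂Px) * (∫ y', l (w.2, y') ∂Py) ∂P)
    (h : (Fin 4 → X × Y) → ℝ)
    (hh : ∀ w : Fin 4 → X × Y,
      h w = (1 / 24) * ∑ σ : Equiv.Perm (Fin 4),
        k ((w (σ 0)).1, (w (σ 1)).1) *
          (l ((w (σ 0)).2, (w (σ 1)).2) + l ((w (σ 2)).2, (w (σ 3)).2)
            - 2 * l ((w (σ 0)).2, (w (σ 2)).2)))
    (m : ℕ) (hm : 4 ≤ m) :
    (∫ W : Fin m → X × Y,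
        ((Nat.factorial (m - 4) : ℝ) / (Nat.factorial m : ℝ)) *
          ∑ i, ∑ j, ∑ q, ∑ r,
            (if i ≠ j ∧ i ≠ q ∧ i ≠ r ∧ j ≠ q ∧ j ≠ r ∧ q ≠ r
              then h ![W i, W j, W q, W r] else 0)
      ∂(Measure.pi fun _ : Fin m => P))
      = HSIC := by
  obtain ⟨Ck, hCk⟩ := hk_bdd
  obtain ⟨Cl, hCl⟩ := hl_bdd
  have hcore : Integrable (hsicCore k l) (Measure.pi fun _ => P) :=
    .of_bound (measurable_hsicCore hk_meas hl_meas).aestronglyMeasurable _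
      (ae_of_all _ (abs_hsicCore_le hCk hCl))
  have hsymm : h = fun w => (1 / 24) * ∑ σ : Equiv.Perm (Fin 4), hsicCore k l (w ∘ σ) :=
    funext hh
  have hint : Integrable h (Measure.pi fun _ => P) := hsymm ▸ (integrable_finsetSum _
    fun σ _ => (measurePreserving_comp_of_injective P σ.injective).integrable_comp_of_integrable
      hcore).const_mul _
  have hmean : ∫ w, h w ∂(Measure.pi fun _ => P) = hsic k l P := by
    rw [hsymm, integral_const_mul, integral_sum_comp_injective P _ (fun σ => σ.injective) hcore,
      integral_hsicCore hk_meas hl_meas hCk hCl, Finset.card_univ, Fintype.card_perm]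
    push_cast [Fintype.card_fin, Nat.factorial]
    ring
  have hcount : ((m - 4).factorial : ℝ) / m.factorial * m.descFactorial 4 = 1 := by
    rw [div_mul_eq_mul_div, ← Nat.cast_mul, Nat.factorial_mul_descFactorial hm,
      div_self (by positivity)]
  simp_rw [sum_ite_pairwise_ne_four _ h]
  rw [integral_const_mul, integral_sum_comp_injective P _ (fun e => e.injective) hint,
    Finset.card_univ, Fintype.card_embedding_eq, Fintype.card_fin, Fintype.card_fin,
    ← mul_assoc, hcount, one_mul, hmean, hHSIC, hPx, hPy, hsic]

/-- **Unbiasedness of the HSIC order-4 U-statistic** (Theorem 2.3, Eqs. 12–13).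
With `W_i = (x_i, y_i)` i.i.d. with law `P` on `X × Y`, the U-statistic
`((m−4)!/m!) Σ_{(i,j,q,r) pairwise distinct} h(W_i, W_j, W_q, W_r)`, where `h` is the
order-4 HSIC kernel, has expectation `HSIC(k, l; P)`. -/
theorem stmt_4
    {X Y : Type*} [MeasurableSpace X] [MeasurableSpace Y]
    (k : X × X → ℝ) (l : Y × Y → ℝ)
    (hk_meas : Measurable k) (hl_meas : Measurable l)
    (hk_bdd : ∃ C : ℝ, ∀ p, |k p| ≤ C) (hl_bdd : ∃ C : ℝ, ∀ p, |l p| ≤ C)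
    (hk_symm : ∀ a b : X, k (a, b) = k (b, a)) (hl_symm : ∀ a b : Y, l (a, b) = l (b, a))
    (P : Measure (X × Y)) [IsProbabilityMeasure P]
    (Px : Measure X) (Py : Measure Y)
    (hPx : Px = P.map Prod.fst) (hPy : Py = P.map Prod.snd)
    (HSIC : ℝ)
    (hHSIC : HSIC =
      (∫ w : (X × Y) × (X × Y), k (w.1.1, w.2.1) * l (w.1.2, w.2.2) ∂(P.prod P))
      + (∫ p, k p ∂(Px.prod Px)) * (∫ p, l p ∂(Py.prod Py))
      - 2 * ∫ w : X × Y, (∫ x', k (w.1, x') ∂Px) * (∫ y', l (w.2, y') ∂Py) ∂P)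
    (h : (Fin 4 → X × Y) → ℝ)
    (hh : ∀ w : Fin 4 → X × Y,
      h w = (1 / 24) * ∑ σ : Equiv.Perm (Fin 4),
        k ((w (σ 0)).1, (w (σ 1)).1) *
          (l ((w (σ 0)).2, (w (σ 1)).2) + l ((w (σ 2)).2, (w (σ 3)).2)
            - 2 * l ((w (σ 0)).2, (w (σ 2)).2)))
    (m : ℕ) (hm : 4 ≤ m) :
    (∫ W : Fin m → X × Y,
        ((Nat.factorial (m - 4) : ℝ) / (Nat.factorial m : ℝ)) *
          ∑ i, ∑ j, ∑ q, ∑ r,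
            (if i ≠ j ∧ i ≠ q ∧ i ≠ r ∧ j ≠ q ∧ j ≠ r ∧ q ≠ r
              then h ![W i, W j, W q, W r] else 0)
      ∂(Measure.pi fun _ : Fin m => P))
      = HSIC :=
  stmt_4_general k l hk_meas hl_meas hk_bdd hl_bdd P Px Py hPx hPy HSIC hHSIC h hh m hm
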